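/- For every integer g ≥ 2, the surface group of genus g, presented as ⟨a_1, b_1, …, a_g, b_g | [a_1,b_1][a_2,b_2]⋯[a_g,b_g] = 1⟩, has uncountably many conjugacy classes of maximal subgroups of infinite index. -/

import Mathlib

open scoped commutatorElement

/-- The surface relator [a₁,b₁][a₂,b₂]⋯[a_g,b_g], where a_i = of (i, false) and
b_i = of (i, true). -/
def surfaceRel (g : ℕ) : FreeGroup (Fin g × Bool) :=
  ((List.finRange g).map
    (fun i => ⁅FreeGroup.of (i, false), FreeGroup.of (i, true)⁆)).prod

/-- The surface group of genus g:
⟨a₁, b₁, …, a_g, b_g ∣ [a₁,b₁][a₂,b₂]⋯[a_g,b_g] = 1⟩. -/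
abbrev SurfaceGroup (g : ℕ) : Type :=
  PresentedGroup ({surfaceRel g} : Set (FreeGroup (Fin g × Bool)))

/-- Conjugacy of subgroups (restricted to those satisfying a property `P`). -/
def conjRel {G : Type*} [Group G] (P : Subgroup G → Prop)
    (M N : {M : Subgroup G // P M}) : Prop :=
  ∃ g : G, (N : Subgroup G) = Subgroup.map (MulAut.conj g).toMonoidHom (M : Subgroup G)

/-!
Let `a₁` act on `ℤ` as the shift `n ↦ n + 1`, `a₂` as an involution `t_S` that swaps `0 ↔ 1`
and one pair of negative integers for each `n ∈ S ⊆ ℕ`, and all other generators trivially; as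
every `bᵢ` acts trivially, the relator holds. The shift makes the action transitive with infinite
orbits, so the stabilizer of `0` has infinite index, and it is maximal because `t_S` fixes every
`n ≥ 2`. Conjugate stabilizers give isomorphic actions, and an isomorphism commuting with the shift
is a translation; since `1` is the largest point moved by every `t_S`, the translation is trivial
and `S` is recovered. So `S ↦ [stabilizer]` embeds the uncountable `Set ℕ` into the conjugacy
classes.
-/

open Function MulAction

lemma Equiv.addRight_one_zpow_apply (n x : ℤ) : (Equiv.addRight (1 : ℤ) ^ n) x = x + n := by
  induction n using Int.induction_on generalizing x with
  | zero => simp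
  | succ k ih => rw [zpow_add_one, Equiv.Perm.mul_apply, Equiv.coe_addRight, ih]; ring
  | pred k ih =>
    rw [zpow_sub_one, Equiv.Perm.mul_apply, ih, Equiv.Perm.inv_def, Equiv.addRight_symm,
      Equiv.coe_addRight]
    ring

section PointStabilizer

variable {G X : Type*} [Group G]

def pointStabilizer (φ : G →* Equiv.Perm X) (p : X) : Subgroup G :=
  (stabilizer (Equiv.Perm X) p).comap φ

lemma mem_pointStabilizer {φ : G →* Equiv.Perm X} {p : X} {x : G} :
    x ∈ pointStabilizer φ p ↔ φ x p = p :=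
  Iff.rfl

lemma mem_of_pointStabilizer_le {φ : G →* Equiv.Perm X} {p : X} {N : Subgroup G}
    (hN : pointStabilizer φ p ≤ N) {x y z : G} (hx : x ∈ N) (hy : y ∈ N)
    (h : φ z (φ x p) = φ y p) : z ∈ N := by
  have hyzx : y⁻¹ * z * x ∈ N := by
    refine hN (mem_pointStabilizer.mpr ?_)
    rw [map_mul, map_mul, map_inv, Equiv.Perm.mul_apply, Equiv.Perm.mul_apply, h,
      Equiv.Perm.inv_def, Equiv.symm_apply_apply]
  simpa [mul_assoc] using N.mul_mem (N.mul_mem hy hyzx) (N.inv_mem hx)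

end PointStabilizer

section ActionsWithShift

variable {G : Type*} [Group G] {φ ψ : G →* Equiv.Perm ℤ} {a : G}

lemma apply_zpow_of_eq_addRight (ha : φ a = Equiv.addRight 1) (n x : ℤ) :
    φ (a ^ n) x = x + n := by
  rw [map_zpow, ha, Equiv.addRight_one_zpow_apply]

/-- A subgroup strictly above the stabilizer of `0` contains some `a ^ c` with `c ≠ 0`, hence `b`
(which fixes `2c²`), hence `a` (which agrees with `b` at `0`), hence everything. -/
theorem isCoatom_pointStabilizer_zero (ha : φ a = Equiv.addRight 1) {b : G} (hb₀ : φ b 0 = 1)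
    (hb : ∀ n, 2 ≤ n → φ b n = n) : IsCoatom (pointStabilizer φ 0) := by
  refine ⟨fun htop => ?_, fun N hN => ?_⟩
  · have hbM : b ∈ pointStabilizer φ 0 := htop ▸ Subgroup.mem_top b
    rw [mem_pointStabilizer, hb₀] at hbM
    exact one_ne_zero hbM
  obtain ⟨x, hxN, hxM⟩ := SetLike.exists_of_lt hN
  set c := φ x 0
  have hc : c ≠ 0 := fun h => hxM (mem_pointStabilizer.mpr h)
  have hac : a ^ c ∈ N :=
    mem_of_pointStabilizer_le hN.le N.one_mem hxN
      (by rw [map_one, Equiv.Perm.one_apply, apply_zpow_of_eq_addRight ha, zero_add])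
  have ha2cc : a ^ (2 * c * c) ∈ N := by
    simpa only [← zpow_mul, mul_comm c, mul_assoc] using N.zpow_mem hac (2 * c)
  have hbN : b ∈ N :=
    mem_of_pointStabilizer_le hN.le ha2cc ha2cc
      (by rw [apply_zpow_of_eq_addRight ha, zero_add, hb _ (by nlinarith [mul_self_pos.mpr hc])])
  have haN : a ∈ N :=
    mem_of_pointStabilizer_le hN.le N.one_mem hbN (by simp [ha, hb₀])
  refine eq_top_iff.mpr fun z _ => ?_
  exact mem_of_pointStabilizer_le hN.le N.one_mem (N.zpow_mem haN (φ z 0))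
    (by rw [map_one, Equiv.Perm.one_apply, apply_zpow_of_eq_addRight ha, zero_add])

theorem infinite_quotient_pointStabilizer_zero (ha : φ a = Equiv.addRight 1) :
    Infinite (G ⧸ pointStabilizer φ 0) := by
  refine Infinite.of_injective (fun n : ℤ => ((a ^ n : G) : G ⧸ pointStabilizer φ 0))
    fun n m h => ?_
  rw [QuotientGroup.eq, mem_pointStabilizer, map_mul, Equiv.Perm.mul_apply, map_inv,
    Equiv.Perm.inv_eq_iff_eq, apply_zpow_of_eq_addRight ha, apply_zpow_of_eq_addRight ha] at h
  omega

/-- Transitive actions with conjugate point stabilizers are isomorphic; here the isomorphism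
commutes with the shift `a`, so it is a translation. -/
theorem apply_add_eq_of_pointStabilizer_eq_map_conj (ha : φ a = Equiv.addRight 1)
    (ha' : ψ a = Equiv.addRight 1) {γ : G}
    (h : pointStabilizer ψ 0 = (pointStabilizer φ 0).map (MulAut.conj γ).toMonoidHom)
    (x : G) (n : ℤ) : φ x (n + φ γ 0) = ψ x n + φ γ 0 := by
  set m := ψ x n
  have hy : a ^ (-m) * x * a ^ n ∈ pointStabilizer ψ 0 := by
    rw [mem_pointStabilizer, map_mul, map_mul, Equiv.Perm.mul_apply, Equiv.Perm.mul_apply,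
      apply_zpow_of_eq_addRight ha', apply_zpow_of_eq_addRight ha', zero_add]
    ring
  rw [h, Subgroup.mem_map_equiv, MulAut.conj_symm_apply, mem_pointStabilizer] at hy
  have hyγ : φ (a ^ (-m) * x * a ^ n * γ) 0 = φ γ 0 := by
    rw [show a ^ (-m) * x * a ^ n * γ = γ * (γ⁻¹ * (a ^ (-m) * x * a ^ n) * γ) by group,
      map_mul, Equiv.Perm.mul_apply, hy]
  simp only [map_mul, Equiv.Perm.mul_apply, apply_zpow_of_eq_addRight ha] at hyγ
  rw [add_comm n]
  omega

end ActionsWithShift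

section PairSwap

/-- Swaps `2k ↔ 2k + 1` for every `k ∈ T`: `x + 1 - 2 * (x % 2)` is the partner of `x`. -/
noncomputable def pairSwapFun (T : Set ℤ) (x : ℤ) : ℤ :=
  open scoped Classical in
  if x / 2 ∈ T then x + 1 - 2 * (x % 2) else x

lemma pairSwapFun_of_mem {T : Set ℤ} {x : ℤ} (hx : x / 2 ∈ T) :
    pairSwapFun T x = x + 1 - 2 * (x % 2) := by
  simp [pairSwapFun, hx]

lemma pairSwapFun_of_notMem {T : Set ℤ} {x : ℤ} (hx : x / 2 ∉ T) : pairSwapFun T x = x := by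
  simp [pairSwapFun, hx]

lemma pairSwapFun_involutive (T : Set ℤ) : Involutive (pairSwapFun T) := by
  intro x
  by_cases hx : x / 2 ∈ T
  · have hy : (x + 1 - 2 * (x % 2)) / 2 ∈ T := by
      rwa [show (x + 1 - 2 * (x % 2)) / 2 = x / 2 by omega]
    rw [pairSwapFun_of_mem hx, pairSwapFun_of_mem hy]
    omega
  · rw [pairSwapFun_of_notMem hx, pairSwapFun_of_notMem hx]

noncomputable def pairSwap (T : Set ℤ) : Equiv.Perm ℤ :=
  (pairSwapFun_involutive T).toPerm

lemma pairSwap_apply_ne_iff {T : Set ℤ} {x : ℤ} : pairSwap T x ≠ x ↔ x / 2 ∈ T := by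
  change pairSwapFun T x ≠ x ↔ _
  by_cases hx : x / 2 ∈ T
  · rw [pairSwapFun_of_mem hx]
    simp only [hx, iff_true]
    omega
  · simp [pairSwapFun_of_notMem hx, hx]

lemma pairSwap_apply_zero {T : Set ℤ} (hT : 0 ∈ T) : pairSwap T 0 = 1 := by
  change pairSwapFun T 0 = 1
  rw [pairSwapFun_of_mem (by simpa using hT)]
  rfl

lemma pairSwap_apply_of_two_le {T : Set ℤ} (hT : ∀ k ∈ T, k ≤ 0) {x : ℤ} (hx : 2 ≤ x) :
    pairSwap T x = x := by
  by_contra h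
  have := hT _ (pairSwap_apply_ne_iff.mp h)
  omega

/-- Both sets have `0` as largest element, which rules out a nonzero translation. -/
lemma eq_of_pairSwap_add {T T' : Set ℤ} (hT : ∀ k ∈ T, k ≤ 0) (hT' : ∀ k ∈ T', k ≤ 0)
    (h₀ : 0 ∈ T) (h₀' : 0 ∈ T') {c : ℤ} (h : ∀ n, pairSwap T (n + c) = pairSwap T' n + c) :
    T = T' := by
  have hmem : ∀ n, (n + c) / 2 ∈ T ↔ n / 2 ∈ T' := fun n => by
    rw [← pairSwap_apply_ne_iff, ← pairSwap_apply_ne_iff, h, Ne, Ne, add_left_inj]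
  have hc_le : c ≤ 0 := by
    have := hT _ ((hmem 1).mpr h₀')
    omega
  have hc_ge : 0 ≤ c := by
    have := hT' _ ((hmem (1 - c)).mp (by simpa using h₀))
    omega
  ext k
  simpa [show c = 0 by omega] using hmem (2 * k)

end PairSwap

lemma lift_surfaceRel_eq_one {g : ℕ} {H : Type*} [Group H] (f : Fin g × Bool → H)
    (hf : ∀ i, f (i, true) = 1) : FreeGroup.lift f (surfaceRel g) = 1 := by
  rw [surfaceRel, map_list_prod, List.map_map]
  refine List.prod_eq_one fun y hy => ?_
  obtain ⟨i, -, rfl⟩ := List.mem_map.mp hy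
  simp [commutatorElement_def, hf]

namespace SurfaceGroup

variable {g : ℕ} {H : Type*} [Group H]

def liftA (x : Fin g → H) : SurfaceGroup g →* H :=
  PresentedGroup.toGroup (f := fun p => bif p.2 then 1 else x p.1) (by
    rintro r rfl
    exact lift_surfaceRel_eq_one _ fun _ => rfl)

@[simp]
lemma liftA_of (x : Fin g → H) (i : Fin g) : liftA x (PresentedGroup.of (i, false)) = x i :=
  PresentedGroup.toGroup.of _

end SurfaceGroup

section SurfaceAction

variable (k : ℕ)

noncomputable def surfaceAction (T : Set ℤ) : SurfaceGroup (k + 2) →* Equiv.Perm ℤ :=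
  SurfaceGroup.liftA fun i => if i = 0 then Equiv.addRight 1 else if i = 1 then pairSwap T else 1

lemma surfaceAction_a₁ (T : Set ℤ) :
    surfaceAction k T (PresentedGroup.of (0, false)) = Equiv.addRight 1 := by
  simp [surfaceAction]

lemma surfaceAction_a₂ (T : Set ℤ) :
    surfaceAction k T (PresentedGroup.of (1, false)) = pairSwap T := by
  simp [surfaceAction]

/-- The indices `m` of the blocks `{2m, 2m + 1}` swapped by the involution encoding `S`. -/
def swapIndices (S : Set ℕ) : Set ℤ :=
  insert 0 (Int.negSucc '' S)

lemma zero_mem_swapIndices (S : Set ℕ) : 0 ∈ swapIndices S :=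
  Set.mem_insert 0 _

lemma nonpos_of_mem_swapIndices {S : Set ℕ} {m : ℤ} (hm : m ∈ swapIndices S) : m ≤ 0 := by
  rcases hm with rfl | ⟨n, -, rfl⟩
  exacts [le_rfl, (Int.negSucc_lt_zero n).le]

lemma swapIndices_injective : Injective swapIndices := by
  intro S S' h
  ext n
  have hn := congrArg (Int.negSucc n ∈ ·) h
  simpa [swapIndices, Int.negSucc_ne_zero] using hn

noncomputable def surfaceStabilizer (S : Set ℕ) : Subgroup (SurfaceGroup (k + 2)) :=
  pointStabilizer (surfaceAction k (swapIndices S)) 0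

theorem isCoatom_surfaceStabilizer (S : Set ℕ) : IsCoatom (surfaceStabilizer k S) :=
  isCoatom_pointStabilizer_zero (surfaceAction_a₁ k _)
    (by rw [surfaceAction_a₂, pairSwap_apply_zero (zero_mem_swapIndices S)])
    fun _ hn => by
      rw [surfaceAction_a₂, pairSwap_apply_of_two_le (fun _ => nonpos_of_mem_swapIndices) hn]

theorem infinite_quotient_surfaceStabilizer (S : Set ℕ) :
    Infinite (SurfaceGroup (k + 2) ⧸ surfaceStabilizer k S) :=
  infinite_quotient_pointStabilizer_zero (surfaceAction_a₁ k _)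

theorem eq_of_surfaceStabilizer_eq_map_conj {S S' : Set ℕ} {γ : SurfaceGroup (k + 2)}
    (h : surfaceStabilizer k S' = (surfaceStabilizer k S).map (MulAut.conj γ).toMonoidHom) :
    S = S' := by
  refine swapIndices_injective <| eq_of_pairSwap_add (fun _ => nonpos_of_mem_swapIndices)
    (fun _ => nonpos_of_mem_swapIndices) (zero_mem_swapIndices S) (zero_mem_swapIndices S')
    (c := surfaceAction k (swapIndices S) γ 0) fun n => ?_
  simpa only [surfaceAction_a₂] using apply_add_eq_of_pointStabilizer_eq_map_conj
    (surfaceAction_a₁ k _) (surfaceAction_a₁ k _) h (PresentedGroup.of (1, false)) n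

end SurfaceAction

lemma conjRel_equivalence {G : Type*} [Group G] (P : Subgroup G → Prop) :
    Equivalence (conjRel P) := by
  have hmap (M : Subgroup G) (γ δ : G) : (M.map (MulAut.conj γ).toMonoidHom).map
      (MulAut.conj δ).toMonoidHom = M.map (MulAut.conj (δ * γ)).toMonoidHom := by
    rw [Subgroup.map_map, map_mul]
    rfl
  refine ⟨fun M => ⟨1, ?_⟩, fun ⟨γ, h⟩ => ⟨γ⁻¹, ?_⟩, fun ⟨γ, h⟩ ⟨δ, h'⟩ => ⟨δ * γ, ?_⟩⟩
  · rw [map_one]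
    exact M.1.map_id.symm
  · rw [h, hmap, inv_mul_cancel, map_one]
    exact (Subgroup.map_id _).symm
  · rw [h', h, hmap]

/-- For every integer g ≥ 2, the surface group of genus g has uncountably many
conjugacy classes of maximal subgroups of infinite index. -/
theorem surfaceGroup_uncountably_many_maximal_infinite_index (g : ℕ) (hg : 2 ≤ g) :
    Uncountable (Quot (conjRel (fun M : Subgroup (SurfaceGroup g) =>
      IsCoatom M ∧ Infinite (SurfaceGroup g ⧸ M)))) := by
  obtain ⟨k, rfl⟩ := Nat.exists_eq_add_of_le' hg
  let stabilizerClass (S : Set ℕ) : Quot (conjRel (fun M : Subgroup (SurfaceGroup (k + 2)) =>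
      IsCoatom M ∧ Infinite (SurfaceGroup (k + 2) ⧸ M))) :=
    Quot.mk _ ⟨surfaceStabilizer k S,
      isCoatom_surfaceStabilizer k S, infinite_quotient_surfaceStabilizer k S⟩
  have hinj : Injective stabilizerClass := fun S S' h => by
    obtain ⟨γ, hγ⟩ := ((conjRel_equivalence _).eqvGen_iff).mp (Quot.eqvGen_exact h)
    exact eq_of_surfaceStabilizer_eq_map_conj k hγ
  have : Uncountable (Set ℕ) := by
    rw [← Cardinal.aleph0_lt_mk_iff, Cardinal.mk_set, Cardinal.mk_nat]
    exact Cardinal.cantor _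
  exact hinj.uncountable
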